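/- Let G be a countable discrete abelian group acting by multiplication by characters on H = L²(E₀) and K = L²(F₀), with Bessel vectors v ∈ H and w ∈ K. If the essential supports of v and w are disjoint up to λ-null sets, then the ranges of the analysis operators Θ_v(H) and Θ_w(K) are orthogonal in ℓ²(G); equivalently, for all h₁ ∈ H, h₂ ∈ K, Σ_{g∈G} ⟨h₁, π(g)v⟩ · conj(⟨h₂, π(g)w⟩) = 0. -/

import Mathlib

/-!
The analysis coefficients are Fourier coefficients: `⟨h₁, π(g)v⟩ = ⟪χ g, h₁ · conj v⟫` in
`L²(μ)`, and `h₁ · conj v` is square integrable because `v` is essentially bounded. Since the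
characters form a Hilbert basis of `L²(μ)`, Parseval's identity turns the sum over `G` into
`∫ (h₁ · conj v) · conj (h₂ · conj w) dμ`, and this integrand vanishes almost everywhere
because `v` and `w` have essentially disjoint supports.
-/

open MeasureTheory ComplexConjugate

namespace MeasureTheory

variable {X : Type*} [MeasurableSpace X] {μ : Measure X}

theorem L2.inner_toLp_toLp {f g : X → ℂ} (hf : MemLp f 2 μ) (hg : MemLp g 2 μ) :
    inner ℂ (hf.toLp f) (hg.toLp g) = ∫ x, g x * conj (f x) ∂μ := by
  rw [L2.inner_def]
  refine integral_congr_ae ?_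
  filter_upwards [hf.coeFn_toLp, hg.coeFn_toLp] with x hfx hgx
  simp [hfx, hgx]

theorem MemLp.mul_conj_of_ae_bound {p : ENNReal} {h v : X → ℂ} (hh : MemLp h p μ)
    (hv : AEStronglyMeasurable v μ) (hvB : ∃ C : ℝ, ∀ᵐ t ∂μ, ‖v t‖ ≤ C) :
    MemLp (fun t => h t * conj (v t)) p μ := by
  obtain ⟨C, hC⟩ := hvB
  have hv_top : MemLp (fun t => conj (v t)) ⊤ μ :=
    memLp_top_of_bound hv.star C (by simpa using hC)
  exact hv_top.mul' hh

theorem ae_eq_zero_or_eq_zero_of_measure_inter_eq_zero {M N : Type*} [Zero M] [Zero N]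
    {v : X → M} {w : X → N} (h : μ ({t | v t ≠ 0} ∩ {t | w t ≠ 0}) = 0) :
    ∀ᵐ t ∂μ, v t = 0 ∨ w t = 0 := by
  filter_upwards [measure_eq_zero_iff_ae_notMem.1 h] with t ht
  rw [or_iff_not_imp_left]
  simpa using ht

section HilbertBasis

variable {ι : Type*} {e : ι → X → ℂ} (he : ∀ i, MemLp (e i) 2 μ)

include he in
theorem orthonormal_toLp [DecidableEq ι]
    (horth : ∀ i j, ∫ x, e i x * conj (e j x) ∂μ = if i = j then (1 : ℂ) else 0) :
    Orthonormal ℂ fun i => (he i).toLp (e i) := by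
  rw [orthonormal_iff_ite]
  intro i j
  rw [L2.inner_toLp_toLp, horth]
  exact if_congr eq_comm rfl rfl

include he in
theorem orthogonal_span_range_toLp_eq_bot
    (hcomp : ∀ f : X → ℂ, MemLp f 2 μ → (∀ i, ∫ x, f x * conj (e i x) ∂μ = 0) → f =ᵐ[μ] 0) :
    (Submodule.span ℂ (Set.range fun i => (he i).toLp (e i)))ᗮ = ⊥ := by
  refine (Submodule.eq_bot_iff _).2 fun f hf => ?_
  refine Lp.ext ((hcomp f (Lp.memLp f) fun i => ?_).trans (Lp.coeFn_zero ℂ 2 μ).symm)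
  have hfi : inner ℂ ((he i).toLp (e i)) f = 0 :=
    (Submodule.mem_orthogonal _ f).1 hf _ (Submodule.subset_span ⟨i, rfl⟩)
  rw [← hfi, L2.inner_def]
  refine integral_congr_ae ?_
  filter_upwards [(he i).coeFn_toLp] with x hx
  simp [hx]

include he in
theorem tsum_integral_mul_conj_mul_conj_integral_mul_conj [DecidableEq ι]
    (horth : ∀ i j, ∫ x, e i x * conj (e j x) ∂μ = if i = j then (1 : ℂ) else 0)
    (hcomp : ∀ f : X → ℂ, MemLp f 2 μ → (∀ i, ∫ x, f x * conj (e i x) ∂μ = 0) → f =ᵐ[μ] 0)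
    {f₁ f₂ : X → ℂ} (hf₁ : MemLp f₁ 2 μ) (hf₂ : MemLp f₂ 2 μ) :
    ∑' i, (∫ x, f₁ x * conj (e i x) ∂μ) * conj (∫ x, f₂ x * conj (e i x) ∂μ) =
      ∫ x, f₁ x * conj (f₂ x) ∂μ := by
  let b := HilbertBasis.mkOfOrthogonalEqBot (orthonormal_toLp he horth)
    (orthogonal_span_range_toLp_eq_bot he hcomp)
  have hb : ⇑b = fun i => (he i).toLp (e i) := HilbertBasis.coe_mkOfOrthogonalEqBot _ _
  have hparseval := b.tsum_inner_mul_inner (hf₂.toLp f₂) (hf₁.toLp f₁)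
  have hconj : ∀ i, ∫ x, e i x * conj (f₂ x) ∂μ = conj (∫ x, f₂ x * conj (e i x) ∂μ) := by
    simp [← integral_conj, mul_comm]
  simp only [hb, L2.inner_toLp_toLp, hconj] at hparseval
  rw [← hparseval]
  exact tsum_congr fun i => mul_comm _ _

end HilbertBasis

end MeasureTheory

theorem stmt9 {G X : Type*} [CommGroup G] [DecidableEq G] [MeasurableSpace X]
    (μ : Measure X) [IsProbabilityMeasure μ]
    (χ : G → X → ℂ)
    (hmeas : ∀ g, Measurable (χ g))
    (hunit : ∀ g x, ‖χ g x‖ = 1)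
    (horth : ∀ g g' : G, ∫ x, χ g x * conj (χ g' x) ∂μ = if g = g' then (1 : ℂ) else 0)
    (hcomp : ∀ f : X → ℂ, MemLp f 2 μ →
      (∀ g : G, ∫ x, f x * conj (χ g x) ∂μ = 0) → f =ᵐ[μ] 0)
    (E₀ F₀ : Set X)
    (v w : X → ℂ) (hv : MemLp v 2 μ) (hw : MemLp w 2 μ)
    -- v and w are Bessel vectors: essentially bounded
    (hvB : ∃ C : ℝ, ∀ᵐ t ∂μ, ‖v t‖ ≤ C) (hwB : ∃ C : ℝ, ∀ᵐ t ∂μ, ‖w t‖ ≤ C)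
    -- the essential supports are disjoint up to null sets
    (hdisj : μ ({t | v t ≠ 0} ∩ {t | w t ≠ 0}) = 0) :
    ∀ h₁ h₂ : X → ℂ, MemLp h₁ 2 μ → MemLp h₂ 2 μ →
      (∀ᵐ t ∂μ, t ∉ E₀ → h₁ t = 0) → (∀ᵐ t ∂μ, t ∉ F₀ → h₂ t = 0) →
      ∑' g : G, (∫ t, h₁ t * conj (χ g t * v t) ∂μ) *
        conj (∫ t, h₂ t * conj (χ g t * w t) ∂μ) = 0 := by
  intro h₁ h₂ hh₁ hh₂ _ _
  have hχ : ∀ g, MemLp (χ g) 2 μ := fun g =>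
    MemLp.of_bound (hmeas g).aestronglyMeasurable 1 (.of_forall fun x => (hunit g x).le)
  have hcoeff : ∀ (h u : X → ℂ) g, ∫ t, h t * conj (χ g t * u t) ∂μ =
      ∫ t, h t * conj (u t) * conj (χ g t) ∂μ := fun h u g =>
    integral_congr_ae (.of_forall fun t => by simp only [map_mul]; ring)
  simp only [hcoeff]
  rw [tsum_integral_mul_conj_mul_conj_integral_mul_conj hχ horth hcomp
    (hh₁.mul_conj_of_ae_bound hv.aestronglyMeasurable hvB) (hh₂.mul_conj_of_ae_bound hw.aestronglyMeasurable hwB)]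
  refine integral_eq_zero_of_ae ?_
  filter_upwards [ae_eq_zero_or_eq_zero_of_measure_inter_eq_zero hdisj] with t ht
  rcases ht with h | h <;> simp [h]
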